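/- In the two-parameter quantum algebra U_{v,t}, the antipode satisfies S(x⁺) = (−1)^{tr|x|} v^{|x|·|x|/2} v_{|x|}^{−1} K_{|x|}^{−1} σ(x)⁺ for every homogeneous x ∈ f, where σ is the twisted anti-involution. -/

import Mathlib

/-!
Both sides are `K`-linear in `x`, so it suffices to treat monomials, by induction on the word,
appending one letter `θ_i` at a time to a word of degree `μ`. On the left this multiplies by
`S(E_i) = -K_i⁻¹ E_i` from the left; on the right, twisted anti-multiplicativity of `σ` puts `E_i`
in front of `σ(x)⁺` with the factor `t^{⟨i,μ⟩-⟨μ,i⟩}`. Moving `E_i` to the left past `K_μ⁻¹`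
costs `v^{μ·i} t^{⟨i,μ⟩-⟨μ,i⟩}`: the powers of `t` match, and `-v^{μ·i}` is exactly the ratio of
`(-1)^{tr ν} v^{ν·ν/2} v_ν⁻¹` at `ν = μ + i` and at `ν = μ`.
-/

noncomputable section

def wdeg {I : Type*} [DecidableEq I] (w : FreeMonoid I) : I →₀ ℕ :=
  (w.toList.map fun i => Finsupp.single i 1).sum

def angN {I : Type*} (form : I → I → ℤ) (ν μ : I →₀ ℕ) : ℤ :=
  ν.sum fun i a => μ.sum fun j b => (a : ℤ) * (b : ℤ) * form i j

def dotN {I : Type*} (form : I → I → ℤ) (ν μ : I →₀ ℕ) : ℤ :=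
  angN form ν μ + angN form μ ν

abbrev FreeAlg (K : Type*) [Field K] (I : Type*) : Type _ :=
  MonoidAlgebra K (FreeMonoid I)

def theta {K : Type*} [Field K] {I : Type*} (i : I) : FreeAlg K I :=
  MonoidAlgebra.of K (FreeMonoid I) (FreeMonoid.of i)

def IsHomog {K : Type*} [Field K] {I : Type*} [DecidableEq I]
    (x : FreeAlg K I) (ν : I →₀ ℕ) : Prop :=
  ∀ w ∈ x.coeff.support, wdeg w = ν

/-- `tr ν = Σ ν_i`. -/
def trN {I : Type*} (ν : I →₀ ℕ) : ℕ := ν.sum fun _ a => a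

/-- The exponent such that `v_ν = v^(vexp ν)`, where `v_i = v^{d_i}` with `2d_i = i·i`. -/
def vexp {I : Type*} (dh : I → ℤ) (ν : I →₀ ℕ) : ℤ := ν.sum fun i a => (a : ℤ) * dh i

/-- `K_ν = Π K_i^{ν_i}` as a unit. -/
def Kpow {U : Type*} [Ring U] {I : Type*} [Fintype I] (Kk : I → Uˣ) (ν : I →₀ ℕ) : Uˣ :=
  (Finset.univ.toList.map fun i => Kk i ^ ν i).prod

theorem FreeMonoid.inductionOn_mul_of {α : Type*} {motive : FreeMonoid α → Prop}
    (w : FreeMonoid α) (one : motive 1) (mul_of : ∀ w a, motive w → motive (w * of a)) :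
    motive w :=
  List.reverseRecOn (motive := fun l => motive (FreeMonoid.ofList l)) w.toList one
    fun l a h => mul_of (FreeMonoid.ofList l) a h

theorem List.prod_map_mul_of_commute {M ι : Type*} [Monoid M] (l : List ι) (f g : ι → M)
    (h : ∀ a b, Commute (g a) (f b)) :
    (l.map fun a => f a * g a).prod = (l.map f).prod * (l.map g).prod := by
  induction l with
  | nil => simp
  | cons a l ih =>
    have hc : Commute (g a) (l.map f).prod :=
      Commute.list_prod_right _ _ fun x hx => by
        obtain ⟨b, -, rfl⟩ := List.mem_map.mp hx
        exact h a b
    simp only [List.map_cons, List.prod_cons, ih]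
    rw [mul_assoc, ← mul_assoc (g a), hc.eq, mul_assoc, mul_assoc]

section Degrees

variable {I : Type*}

theorem wdeg_one [DecidableEq I] : wdeg (1 : FreeMonoid I) = 0 := rfl

theorem wdeg_of [DecidableEq I] (i : I) : wdeg (FreeMonoid.of i) = Finsupp.single i 1 := by
  simp [wdeg, FreeMonoid.toList_of]

theorem wdeg_mul [DecidableEq I] (w w' : FreeMonoid I) : wdeg (w * w') = wdeg w + wdeg w' := by
  simp [wdeg, FreeMonoid.toList_mul]

variable (form : I → I → ℤ)

theorem angN_zero_left (μ : I →₀ ℕ) : angN form 0 μ = 0 := by simp [angN]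

theorem angN_zero_right (ν : I →₀ ℕ) : angN form ν 0 = 0 := by simp [angN]

theorem angN_add_left (ν₁ ν₂ μ : I →₀ ℕ) :
    angN form (ν₁ + ν₂) μ = angN form ν₁ μ + angN form ν₂ μ := by
  unfold angN
  rw [Finsupp.sum_add_index' (by simp)]
  intro i a₁ a₂
  rw [← Finsupp.sum_add]
  congr 1; ext j b; push_cast; ring

theorem angN_add_right (ν μ₁ μ₂ : I →₀ ℕ) :
    angN form ν (μ₁ + μ₂) = angN form ν μ₁ + angN form ν μ₂ := by
  unfold angN
  rw [← Finsupp.sum_add]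
  congr 1; ext i a
  rw [Finsupp.sum_add_index' (by simp)]
  intro j b₁ b₂; push_cast; ring

theorem angN_single_single (i j : I) :
    angN form (Finsupp.single i 1) (Finsupp.single j 1) = form i j := by
  simp [angN, Finsupp.sum_single_index]

theorem trN_add (ν μ : I →₀ ℕ) : trN (ν + μ) = trN ν + trN μ :=
  Finsupp.sum_add_index' (fun _ => rfl) fun _ _ _ => rfl

theorem trN_single (i : I) (n : ℕ) : trN (Finsupp.single i n) = n :=
  Finsupp.sum_single_index rfl

variable (dh : I → ℤ)

theorem vexp_add (ν μ : I →₀ ℕ) : vexp dh (ν + μ) = vexp dh ν + vexp dh μ :=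
  Finsupp.sum_add_index' (by simp) fun i a b => by push_cast; ring

theorem vexp_single (i : I) (n : ℕ) : vexp dh (Finsupp.single i n) = n * dh i :=
  Finsupp.sum_single_index (by simp)

end Degrees

section Kpow

variable {U : Type*} [Ring U] {I : Type*} [Fintype I] (Kk : I → Uˣ)

theorem Kpow_zero : Kpow Kk 0 = 1 := by simp [Kpow]

theorem Kpow_add (hKcomm : ∀ i j, Kk i * Kk j = Kk j * Kk i) (ν μ : I →₀ ℕ) :
    Kpow Kk (ν + μ) = Kpow Kk ν * Kpow Kk μ := by
  simp only [Kpow, Finsupp.add_apply, pow_add]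
  exact List.prod_map_mul_of_commute _ _ _ fun a b => Commute.pow_pow (hKcomm a b) _ _

theorem Kpow_single [DecidableEq I] (i : I) (n : ℕ) : Kpow Kk (Finsupp.single i n) = Kk i ^ n := by
  rw [Kpow, List.prod_map_eq_pow_single i _ fun j hj _ => by
    rw [Finsupp.single_eq_of_ne' (Ne.symm hj), pow_zero]]
  simp [List.count_eq_one_of_mem (Finset.nodup_toList _) (Finset.mem_toList.mpr
    (Finset.mem_univ i))]

end Kpow

section Homogeneous

variable {K : Type*} [Field K] {I : Type*} [DecidableEq I]

theorem isHomog_of (w : FreeMonoid I) : IsHomog (MonoidAlgebra.of K (FreeMonoid I) w) (wdeg w) := by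
  intro w' hw'
  rw [MonoidAlgebra.of_apply, MonoidAlgebra.coeff_single] at hw'
  rw [Finset.mem_singleton.mp (Finsupp.support_single_subset hw')]

theorem isHomog_theta (i : I) : IsHomog (theta i : FreeAlg K I) (Finsupp.single i 1) :=
  wdeg_of i ▸ isHomog_of _

theorem IsHomog.linearMap_eq {M : Type*} [AddCommMonoid M] [Module K M]
    {f g : FreeAlg K I →ₗ[K] M} {x : FreeAlg K I} {ν : I →₀ ℕ} (hx : IsHomog x ν)
    (h : ∀ w, wdeg w = ν → f (MonoidAlgebra.of K (FreeMonoid I) w) =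
      g (MonoidAlgebra.of K (FreeMonoid I) w)) :
    f x = g x := by
  rw [← MonoidAlgebra.sum_coeff_single x, map_finsuppSum, map_finsuppSum]
  refine Finsupp.sum_congr fun w hw => ?_
  have hsingle : MonoidAlgebra.single w (x.coeff w) =
      x.coeff w • MonoidAlgebra.of K (FreeMonoid I) w := by
    simp [MonoidAlgebra.of_apply]
  rw [hsingle, map_smul, map_smul, h w (hx w hw)]

end Homogeneous

theorem Units.mul_inv_eq_smul_inv_mul {K U : Type*} [CommSemiring K] [Semiring U] [Algebra K U]
    {k : Uˣ} {a : U} {c : K} (h : (k : U) * a = c • (a * k)) :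
    a * ↑k⁻¹ = c • (↑k⁻¹ * a) :=
  calc a * ↑k⁻¹ = ↑k⁻¹ * ((k : U) * a) * ↑k⁻¹ := by rw [← mul_assoc, Units.inv_mul, one_mul]
    _ = c • (↑k⁻¹ * a) := by
      rw [h, mul_smul_comm, smul_mul_assoc, mul_assoc, mul_assoc, Units.mul_inv, mul_one]

section Braiding

variable {K : Type*} [Field K] {I : Type*} (v t : Kˣ) (form : I → I → ℤ)

def braid (ν μ : I →₀ ℕ) : Kˣ :=
  v ^ dotN form ν μ * t ^ (angN form μ ν - angN form ν μ)

theorem braid_zero_left (μ : I →₀ ℕ) : braid v t form 0 μ = 1 := by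
  simp [braid, dotN, angN_zero_left, angN_zero_right]

theorem braid_add_left (ν₁ ν₂ μ : I →₀ ℕ) :
    braid v t form (ν₁ + ν₂) μ = braid v t form ν₁ μ * braid v t form ν₂ μ := by
  simp only [braid, dotN, angN_add_left, angN_add_right, zpow_add, zpow_sub, mul_inv]
  ac_rfl

end Braiding

section Coefficient

variable {K : Type*} [Field K] {I : Type*} (v : Kˣ) (form : I → I → ℤ) (dh : I → ℤ)

/-- The paper's `(-1)^{tr ν} v^{ν·ν/2} v_ν⁻¹`, using `ν·ν/2 = ⟨ν,ν⟩`. -/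
def antipodeCoeff (ν : I →₀ ℕ) : K :=
  (-1) ^ trN ν * ((v ^ (angN form ν ν - vexp dh ν) : Kˣ) : K)

theorem antipodeCoeff_zero : antipodeCoeff v form dh (0 : I →₀ ℕ) = 1 := by
  simp [antipodeCoeff, trN, vexp, angN_zero_left]

theorem antipodeCoeff_add_single {i : I} (hdh : dh i = form i i) (μ : I →₀ ℕ) :
    antipodeCoeff v form dh (μ + Finsupp.single i 1) =
      -(antipodeCoeff v form dh μ * ((v ^ dotN form μ (Finsupp.single i 1) : Kˣ) : K)) := by
  have hexp : angN form (μ + Finsupp.single i 1) (μ + Finsupp.single i 1) -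
      vexp dh (μ + Finsupp.single i 1) =
      angN form μ μ - vexp dh μ + dotN form μ (Finsupp.single i 1) := by
    simp only [angN_add_left, angN_add_right, angN_single_single, vexp_add, vexp_single, dotN,
      hdh]
    ring
  rw [antipodeCoeff, antipodeCoeff, hexp, trN_add, trN_single, zpow_add, Units.val_mul]
  ring

end Coefficient

section Antipode

variable {I : Type*} [Fintype I] [DecidableEq I] {K : Type*} [Field K]
  {U : Type*} [Ring U] [Algebra K U] (v t : Kˣ) (form : I → I → ℤ)

theorem Kpow_wdeg_mul_eq_braid_smul (E : I → U) (Kk : I → Uˣ)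
    (hKcomm : ∀ i j, Kk i * Kk j = Kk j * Kk i)
    (hKE : ∀ i j, (Kk i : U) * E j =
      (braid v t form (Finsupp.single i 1) (Finsupp.single j 1) : K) • (E j * (Kk i : U)))
    (w : FreeMonoid I) (j : I) :
    (Kpow Kk (wdeg w) : U) * E j =
      (braid v t form (wdeg w) (Finsupp.single j 1) : K) • (E j * Kpow Kk (wdeg w)) := by
  induction w using FreeMonoid.inductionOn_mul_of with
  | one => simp [wdeg_one, Kpow_zero, braid_zero_left]
  | mul_of w i ih =>
    rw [wdeg_mul, wdeg_of, Kpow_add Kk hKcomm, Kpow_single, pow_one, braid_add_left,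
      Units.val_mul, mul_assoc, hKE, mul_smul_comm, ← mul_assoc, ih, smul_mul_assoc, smul_smul,
      mul_comm (braid v t form _ _ : K), mul_assoc, Units.val_mul]

theorem antipode_plus_of (dh : I → ℤ) (hdh : ∀ i, dh i = form i i) (E : I → U) (Kk : I → Uˣ)
    (hKcomm : ∀ i j, Kk i * Kk j = Kk j * Kk i)
    (hKE : ∀ i j, (Kk i : U) * E j =
      (braid v t form (Finsupp.single i 1) (Finsupp.single j 1) : K) • (E j * (Kk i : U)))
    (plus : FreeAlg K I →ₐ[K] U) (hplusθ : ∀ i, plus (theta i) = E i)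
    (σ : FreeAlg K I →ₗ[K] FreeAlg K I) (hσone : σ 1 = 1)
    (hσtheta : ∀ i : I, σ (theta i) = theta i)
    (hσmul : ∀ (x y : FreeAlg K I) (ν μ : I →₀ ℕ), IsHomog x ν → IsHomog y μ →
      σ (x * y) = ((t ^ (angN form μ ν - angN form ν μ) : Kˣ) : K) • (σ y * σ x))
    (S : U →ₗ[K] U) (hS1 : S 1 = 1) (hSmul : ∀ a b : U, S (a * b) = S b * S a)
    (hSE : ∀ i, S (E i) = -((((Kk i)⁻¹ : Uˣ) : U) * E i)) (w : FreeMonoid I) :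
    S (plus (MonoidAlgebra.of K (FreeMonoid I) w)) =
      antipodeCoeff v form dh (wdeg w) •
        ((((Kpow Kk (wdeg w))⁻¹ : Uˣ) : U) * plus (σ (MonoidAlgebra.of K (FreeMonoid I) w))) := by
  induction w using FreeMonoid.inductionOn_mul_of with
  | one =>
    rw [map_one, hσone, map_one, hS1, wdeg_one, Kpow_zero, antipodeCoeff_zero, inv_one,
      Units.val_one, one_mul, one_smul]
  | mul_of w i ih =>
    set μ := wdeg w
    set εi : I →₀ ℕ := Finsupp.single i 1
    set x := MonoidAlgebra.of K (FreeMonoid I) w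
    have hwdeg : wdeg (w * FreeMonoid.of i) = μ + εi := by rw [wdeg_mul, wdeg_of]
    have hx : MonoidAlgebra.of K (FreeMonoid I) (w * FreeMonoid.of i) = x * theta i := map_mul ..
    have hKpow : Kpow Kk (μ + εi) = Kpow Kk μ * Kk i := by
      rw [Kpow_add Kk hKcomm, Kpow_single, pow_one]
    have hEK : E i * ↑(Kpow Kk μ)⁻¹ = (braid v t form μ εi : K) • (↑(Kpow Kk μ)⁻¹ * E i) :=
      Units.mul_inv_eq_smul_inv_mul (Kpow_wdeg_mul_eq_braid_smul v t form E Kk hKcomm hKE w i)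
    have hσx : σ (x * theta i) =
        ((t ^ (angN form εi μ - angN form μ εi) : Kˣ) : K) • (theta i * σ x) := by
      rw [hσmul x (theta i) μ εi (isHomog_of w) (isHomog_theta i), hσtheta]
    have hcoeff : -(antipodeCoeff v form dh μ * braid v t form μ εi) =
        antipodeCoeff v form dh (μ + εi) * ((t ^ (angN form εi μ - angN form μ εi) : Kˣ) : K) := by
      rw [antipodeCoeff_add_single v form dh (hdh i), braid, Units.val_mul]
      ring
    rw [hwdeg, hx]
    calc S (plus (x * theta i))
        = -antipodeCoeff v form dh μ •
            (↑(Kk i)⁻¹ * (E i * ↑(Kpow Kk μ)⁻¹) * plus (σ x)) := by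
          rw [map_mul, hSmul, hplusθ, hSE, ih, neg_mul, mul_smul_comm, neg_smul, mul_assoc,
            mul_assoc, mul_assoc]
      _ = (-(antipodeCoeff v form dh μ * braid v t form μ εi)) •
            (↑(Kk i)⁻¹ * ↑(Kpow Kk μ)⁻¹ * (E i * plus (σ x))) := by
          rw [hEK, mul_smul_comm, smul_mul_assoc, smul_smul, neg_mul, mul_assoc, mul_assoc,
            mul_assoc]
      _ = _ := by
          rw [hcoeff, hσx, hKpow, mul_inv_rev, Units.val_mul, map_smul, map_mul, hplusθ,
            mul_smul_comm, smul_smul]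

end Antipode

/-- in `U_{v,t}`, the antipode satisfies
`S(x⁺) = (−1)^{tr|x|} v^{|x|·|x|/2} v_{|x|}^{−1} K_{|x|}^{−1} σ(x)⁺` for homogeneous `x ∈ f`. -/
theorem antipode_plus {I : Type*} [Fintype I] [DecidableEq I] {K : Type*} [Field K]
    (v t : Kˣ) (form : I → I → ℤ)
    (dh : I → ℤ) (hdh : ∀ i, 2 * dh i = dotN form (Finsupp.single i 1) (Finsupp.single i 1))
    {U : Type*} [Ring U] [Algebra K U]
    (E : I → U) (Kk : I → Uˣ)
    (hKcomm : ∀ i j, Kk i * Kk j = Kk j * Kk i)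
    (hKE : ∀ i j, (Kk i : U) * E j =
      ((v ^ dotN form (Finsupp.single i 1) (Finsupp.single j 1) *
        t ^ (angN form (Finsupp.single j 1) (Finsupp.single i 1) -
             angN form (Finsupp.single i 1) (Finsupp.single j 1)) : Kˣ) : K) •
        (E j * (Kk i : U)))
    (plus : FreeAlg K I →ₐ[K] U)
    (hplusθ : ∀ i, plus (theta i) = E i)
    (σ : FreeAlg K I →ₗ[K] FreeAlg K I)
    (hσone : σ 1 = 1)
    (hσtheta : ∀ i : I, σ (theta i) = theta i)
    (hσmul : ∀ (x y : FreeAlg K I) (ν μ : I →₀ ℕ), IsHomog x ν → IsHomog y μ →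
      σ (x * y) = ((t ^ (angN form μ ν - angN form ν μ) : Kˣ) : K) • (σ y * σ x))
    (S : U →ₗ[K] U)
    (hS1 : S 1 = 1)
    (hSmul : ∀ a b : U, S (a * b) = S b * S a)
    (hSE : ∀ i, S (E i) = -((((Kk i)⁻¹ : Uˣ) : U) * E i)) :
    ∀ (x : FreeAlg K I) (ν : I →₀ ℕ), IsHomog x ν → ∀ e : ℤ, 2 * e = dotN form ν ν →
      S (plus x) =
        (((-1 : K) ^ trN ν) * ((v ^ (e - vexp dh ν) : Kˣ) : K)) •
          (((((Kpow Kk ν)⁻¹ : Uˣ) : U)) * plus (σ x)) := by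
  intro x ν hx e he
  obtain rfl : e = angN form ν ν := by rw [dotN] at he; omega
  have hdh' : ∀ i, dh i = form i i := fun i => by
    have h := hdh i
    rw [dotN, angN_single_single] at h
    omega
  refine hx.linearMap_eq (f := S ∘ₗ plus.toLinearMap)
    (g := antipodeCoeff v form dh ν •
      (LinearMap.mulLeft K (((Kpow Kk ν)⁻¹ : Uˣ) : U) ∘ₗ plus.toLinearMap ∘ₗ σ)) fun w hw => ?_
  subst hw
  exact antipode_plus_of v t form dh hdh' E Kk hKcomm hKE plus hplusθ σ hσone hσtheta hσmul
    S hS1 hSmul hSE w
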